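/- arXiv:2003.12549 — 5 statements merged into one kernel-verified Lean document; each statement's English description precedes it below -/
import Mathlib

section
/- Let T be an isometry on a Hilbert space H with ⋂_{n≥0} Tⁿ(H) = {0} and with dim ker T* = m finite. Let M be a nonzero closed nearly T⁻¹ invariant subspace of H. Then the subspace M ⊖ (M ∩ T(H)) is nonzero and finite-dimensional, and 1 ≤ dim(M ⊖ (M ∩ T(H))) ≤ m. -/
/-!
Let `R = T(H)`, closed because `T` is an isometry, and `W = M ⊖ (M ∩ R)`. Since `W ∩ R = 0` and
`R` has the complement `ker T* = R^⊥`, the projection along `R` embeds `W` into `ker T*`, so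
`dim W ≤ m`. If `W` were `0`, the closed subspace `M` would lie in `R`; near `T⁻¹` invariance then
gives `M ⊆ T(M)`, hence `M ⊆ Tⁿ(H)` for every `n`, and `M = 0` by purity.
-/

namespace Submodule

section LinearAlgebra

variable {R E : Type*} [Ring R] [AddCommGroup E] [Module R E]

theorem injective_projectionOnto_comp_subtype_of_disjoint {W p q : Submodule R E}
    (hpq : IsCompl p q) (hW : Disjoint W q) :
    Function.Injective (p.projectionOnto q hpq ∘ₗ W.subtype) := by
  rwa [← LinearMap.ker_eq_bot, LinearMap.ker_comp, ker_projectionOnto,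
    ← disjoint_iff_comap_eq_bot]

theorem le_range_pow_of_le_range {f : E →ₗ[R] E} {M : Submodule R E}
    (hnear : ∀ g, f g ∈ M → g ∈ M) (hM : M ≤ LinearMap.range f) (n : ℕ) :
    M ≤ LinearMap.range (f ^ n) := by
  induction n with
  | zero => simp [Module.End.one_eq_id]
  | succ n ih =>
    intro x hx
    obtain ⟨g, rfl⟩ := hM hx
    obtain ⟨h, rfl⟩ := ih (hnear g hx)
    exact ⟨h, by rw [pow_succ', Module.End.mul_apply]⟩

theorem eq_bot_of_le_range_of_iInf_range_pow_eq_bot {f : E →ₗ[R] E} {M : Submodule R E}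
    (hpure : ⨅ n : ℕ, LinearMap.range (f ^ n) = ⊥)
    (hnear : ∀ g, f g ∈ M → g ∈ M) (hM : M ≤ LinearMap.range f) : M = ⊥ :=
  le_bot_iff.mp <| hpure ▸ le_iInf (le_range_pow_of_le_range hnear hM)

variable {K : Type*} [DivisionRing K] [Module K E] {W p q : Submodule K E} [FiniteDimensional K p]

theorem finiteDimensional_of_disjoint_of_isCompl (hpq : IsCompl p q) (hW : Disjoint W q) :
    FiniteDimensional K W :=
  .of_injective _ (injective_projectionOnto_comp_subtype_of_disjoint hpq hW)

theorem finrank_le_of_disjoint_of_isCompl (hpq : IsCompl p q) (hW : Disjoint W q) :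
    Module.finrank K W ≤ Module.finrank K p :=
  LinearMap.finrank_le_finrank_of_injective
    (injective_projectionOnto_comp_subtype_of_disjoint hpq hW)

end LinearAlgebra

section InnerProductSpace

variable {𝕜 E : Type*} [RCLike 𝕜] [NormedAddCommGroup E] [InnerProductSpace 𝕜 E]

theorem disjoint_inf_orthogonal_inf (M N : Submodule 𝕜 E) : Disjoint (M ⊓ (M ⊓ N)ᗮ) N := by
  rw [disjoint_def]
  intro x hx hxN
  exact (orthogonal_disjoint (M ⊓ N)).le_bot ⟨⟨hx.1, hxN⟩, hx.2⟩

theorem le_of_inf_orthogonal_inf_eq_bot {M N : Submodule 𝕜 E} [(M ⊓ N).HasOrthogonalProjection]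
    (h : M ⊓ (M ⊓ N)ᗮ = ⊥) : M ≤ N := by
  have hsplit := sup_orthogonal_inf_of_hasOrthogonalProjection (inf_le_left : M ⊓ N ≤ M)
  rw [inf_comm (M ⊓ N)ᗮ M, h, sup_bot_eq] at hsplit
  exact hsplit ▸ inf_le_right

end InnerProductSpace

end Submodule

open Submodule

/-- If `T` is a pure isometry (⋂ Tⁿ(H) = {0}) with `dim ker T* = m` finite and
`M` is a nonzero closed nearly `T⁻¹` invariant subspace, then `M ⊖ (M ∩ T(H))` is nonzero,
finite-dimensional, and `1 ≤ dim (M ⊖ (M ∩ T(H))) ≤ m`. -/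
theorem dim_wandering_subspace_le_multiplicity
    {H : Type*} [NormedAddCommGroup H] [InnerProductSpace ℂ H] [CompleteSpace H]
    (T : H →L[ℂ] H)
    -- `T` is an isometry with `⋂_{n≥0} Tⁿ(H) = {0}`
    (hiso : Isometry T)
    (hpure : (⨅ n : ℕ, LinearMap.range ((T ^ n : H →L[ℂ] H) : H →ₗ[ℂ] H)) = ⊥)
    -- `dim ker T* = m` is finite
    (m : ℕ)
    [FiniteDimensional ℂ (LinearMap.ker ((ContinuousLinearMap.adjoint T : H →L[ℂ] H) : H →ₗ[ℂ] H))]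
    (hm : Module.finrank ℂ (LinearMap.ker ((ContinuousLinearMap.adjoint T : H →L[ℂ] H) : H →ₗ[ℂ] H)) = m)
    -- `M` is a nonzero closed nearly `T⁻¹` invariant subspace of `H`
    (M : Submodule ℂ H) (hMclosed : IsClosed (M : Set H)) (hMne : M ≠ ⊥)
    (hnear : ∀ g : H, T g ∈ M → g ∈ M) :
    M ⊓ (M ⊓ LinearMap.range (T : H →ₗ[ℂ] H))ᗮ ≠ ⊥ ∧
    FiniteDimensional ℂ (M ⊓ (M ⊓ LinearMap.range (T : H →ₗ[ℂ] H))ᗮ : Submodule ℂ H) ∧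
    1 ≤ Module.finrank ℂ (M ⊓ (M ⊓ LinearMap.range (T : H →ₗ[ℂ] H))ᗮ : Submodule ℂ H) ∧
    Module.finrank ℂ (M ⊓ (M ⊓ LinearMap.range (T : H →ₗ[ℂ] H))ᗮ : Submodule ℂ H) ≤ m := by
  set R := LinearMap.range (T : H →ₗ[ℂ] H)
  have hR : IsClosed (R : Set H) := by
    rw [LinearMap.coe_range, ContinuousLinearMap.coe_coe]
    exact hiso.isClosedEmbedding.isClosed_range
  have : CompleteSpace R := hR.completeSpace_coe
  have : CompleteSpace ↥(M ⊓ R) := (hMclosed.inter hR).completeSpace_coe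
  have hcompl : IsCompl (LinearMap.ker (ContinuousLinearMap.adjoint T : H →ₗ[ℂ] H)) R := by
    rw [← T.orthogonal_range]
    exact R.isCompl_orthogonal.symm
  have hdisj := disjoint_inf_orthogonal_inf M R
  have hW : M ⊓ (M ⊓ R)ᗮ ≠ ⊥ := fun h ↦ hMne <|
    eq_bot_of_le_range_of_iInf_range_pow_eq_bot (by simpa [ContinuousLinearMap.toLinearMap_pow] using hpure) hnear
      (le_of_inf_orthogonal_inf_eq_bot h)
  have hfin := finiteDimensional_of_disjoint_of_isCompl hcompl hdisj
  have : Nontrivial ↥(M ⊓ (M ⊓ R)ᗮ) := nontrivial_iff_ne_bot.mpr hW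
  exact ⟨hW, hfin, Module.finrank_pos, hm ▸ finrank_le_of_disjoint_of_isCompl hcompl hdisj⟩
end

section
/- Let H be a Hilbert space and T a bounded operator on H such that ‖h‖ ≤ ‖Th‖ for all h ∈ H, and let M be a closed nearly T⁻¹ invariant subspace of H. Then T*T is invertible, and setting R = (T*T)⁻¹ T* P and Q = P', where P is the orthogonal projection of H onto M ∩ T(H) and P' is the orthogonal projection of H onto M ⊖ (M ∩ T(H)), one has for all h ∈ M and all p ∈ ℕ: h = Σ_{k=0}^p T^k Q R^k h + T^{p+1} R^{p+1} h. -/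
/-!
Since `‖h‖ ≤ ‖T h‖`, the operator `T*T` dominates the identity and is therefore invertible in the
C⋆-algebra of bounded operators. For `h ∈ M`, `P h = T g` for a unique `g`, namely `R h`, and
`g ∈ M` by near invariance; so `h = Q h + P h = Q h + T (R h)` with `R h ∈ M` again, and iterating
this one-step decomposition gives the formula.
-/

open ContinuousLinearMap

namespace ContinuousLinearMap

section Iteration

variable {R E : Type*} [Semiring R] [TopologicalSpace E] [AddCommMonoid E] [Module R E]

lemma eq_sum_pow_add_pow_of_forall_eq_add {T Q A : E →L[R] E} {M : Set E}
    (hA : ∀ h ∈ M, A h ∈ M) (hdecomp : ∀ h ∈ M, h = Q h + T (A h)) {h : E} (hh : h ∈ M)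
    (p : ℕ) :
    h = ∑ k ∈ Finset.range (p + 1), (T ^ k) (Q ((A ^ k) h)) + (T ^ (p + 1)) ((A ^ (p + 1)) h) := by
  induction p generalizing h with
  | zero => simpa using hdecomp h hh
  | succ p ih =>
    conv_lhs => rw [hdecomp h hh, ih (hA h hh), map_add, map_sum]
    simp only [Finset.sum_range_succ' _ (p + 1), pow_succ' T, pow_succ A, mul_apply_eq_comp,
      pow_zero, one_apply_eq_self]
    abel

end Iteration

variable {𝕜 E : Type*} [RCLike 𝕜] [NormedAddCommGroup E] [InnerProductSpace 𝕜 E]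

lemma one_le_adjoint_comp_self [CompleteSpace E] {T : E →L[𝕜] E} (hT : ∀ h, ‖h‖ ≤ ‖T h‖) :
    1 ≤ adjoint T ∘L T := by
  rw [le_def, isPositive_def']
  refine ⟨(isPositive_adjoint_comp_self T).isSelfAdjoint.sub (.one _), fun x => ?_⟩
  simp only [reApplyInnerSelf_apply, sub_apply, inner_sub_left, comp_apply, adjoint_inner_left,
    one_apply_eq_self, map_sub, inner_self_eq_norm_sq, sub_nonneg]
  gcongr
  exact hT x

end ContinuousLinearMap

lemma Submodule.eq_add_of_mem_inf_orthogonal {𝕜 E : Type*} [RCLike 𝕜] [NormedAddCommGroup E]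
    [InnerProductSpace 𝕜 E] {M N : Submodule 𝕜 E}
    (hNM : N ≤ M) {x p q : E} (hx : x ∈ M) (hp : p ∈ N)
    (hxp : x - p ∈ Nᗮ) (hq : q ∈ M ⊓ Nᗮ) (hxq : x - q ∈ (M ⊓ Nᗮ)ᗮ) : x = q + p := by
  have hmem : x - q - p ∈ M ⊓ Nᗮ :=
    ⟨M.sub_mem (M.sub_mem hx hq.1) (hNM hp), by simpa [sub_right_comm] using Nᗮ.sub_mem hxp hq.2⟩
  have hmem_orth : x - q - p ∈ (M ⊓ Nᗮ)ᗮ :=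
    (M ⊓ Nᗮ)ᗮ.sub_mem hxq (Submodule.orthogonal_le inf_le_right (N.le_orthogonal_orthogonal hp))
  rw [← sub_eq_zero, ← sub_sub]
  exact Submodule.disjoint_def.mp (orthogonal_disjoint _) _ hmem hmem_orth

theorem nearly_invariant_decomposition_general
    {H : Type*} [NormedAddCommGroup H] [InnerProductSpace ℂ H] [CompleteSpace H]
    (T : H →L[ℂ] H)
    (hT : ∀ h : H, ‖h‖ ≤ ‖T h‖)
    -- `M` is a closed nearly `T⁻¹` invariant subspace
    (M : Submodule ℂ H)
    (hnear : ∀ g : H, T g ∈ M → g ∈ M)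
    -- `P` is the orthogonal projection of `H` onto `M ∩ T(H)`
    (P : H →L[ℂ] H)
    (hP1 : ∀ x : H, P x ∈ M ⊓ LinearMap.range (T : H →ₗ[ℂ] H))
    (hP2 : ∀ x : H, x - P x ∈ (M ⊓ LinearMap.range (T : H →ₗ[ℂ] H))ᗮ)
    -- `Q = P'` is the orthogonal projection of `H` onto `M ⊖ (M ∩ T(H))`
    (Q : H →L[ℂ] H)
    (hQ1 : ∀ x : H, Q x ∈ M ⊓ (M ⊓ LinearMap.range (T : H →ₗ[ℂ] H))ᗮ)
    (hQ2 : ∀ x : H, x - Q x ∈ (M ⊓ (M ⊓ LinearMap.range (T : H →ₗ[ℂ] H))ᗮ)ᗮ) :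
    -- `T*T` is invertible, and the decomposition formula holds with `R = (T*T)⁻¹ T* P`
    ∃ J : H →L[ℂ] H,
      J.comp ((ContinuousLinearMap.adjoint T).comp T) = ContinuousLinearMap.id ℂ H ∧
      ((ContinuousLinearMap.adjoint T).comp T).comp J = ContinuousLinearMap.id ℂ H ∧
      ∀ h ∈ M, ∀ p : ℕ,
        h = (∑ k ∈ Finset.range (p + 1),
              (T ^ k) (Q (((J.comp ((ContinuousLinearMap.adjoint T).comp P)) ^ k) h)))
            + (T ^ (p + 1)) (((J.comp ((ContinuousLinearMap.adjoint T).comp P)) ^ (p + 1)) h) := by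
  have hS : IsUnit (adjoint T ∘L T) := CStarAlgebra.isUnit_of_le 1 (one_le_adjoint_comp_self hT)
  set J : H →L[ℂ] H := ↑hS.unit⁻¹
  have hJS : J ∘L (adjoint T ∘L T) = .id ℂ H := hS.val_inv_mul
  refine ⟨J, hJS, hS.mul_val_inv, fun h hh p => ?_⟩
  have hR : ∀ x, J (adjoint T (P x)) ∈ M ∧ T (J (adjoint T (P x))) = P x := by
    intro x
    obtain ⟨hPM, g, hg : T g = P x⟩ := hP1 x
    have hJg : J (adjoint T (P x)) = g := by rw [← hg]; exact congr($hJS g)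
    rw [hJg, hg]
    exact ⟨hnear g (hg ▸ hPM), rfl⟩
  refine eq_sum_pow_add_pow_of_forall_eq_add (fun x _ => (hR x).1) (fun x hx => ?_) hh p
  rw [comp_apply, comp_apply, (hR x).2]
  exact Submodule.eq_add_of_mem_inf_orthogonal inf_le_left hx (hP1 x) (hP2 x) (hQ1 x) (hQ2 x)

/-- Erard's decomposition lemma. If `‖h‖ ≤ ‖Th‖` for all `h` and `M` is a
closed nearly `T⁻¹` invariant subspace, then `T*T` is invertible and, with
`R = (T*T)⁻¹ T* P` (`P` the orthogonal projection onto `M ∩ T(H)`) and `Q = P'` (the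
orthogonal projection onto `M ⊖ (M ∩ T(H))`), every `h ∈ M` satisfies
`h = Σ_{k=0}^p T^k Q R^k h + T^{p+1} R^{p+1} h` for all `p ∈ ℕ`. -/
theorem nearly_invariant_decomposition
    {H : Type*} [NormedAddCommGroup H] [InnerProductSpace ℂ H] [CompleteSpace H]
    (T : H →L[ℂ] H)
    (hT : ∀ h : H, ‖h‖ ≤ ‖T h‖)
    -- `M` is a closed nearly `T⁻¹` invariant subspace
    (M : Submodule ℂ H) (hMclosed : IsClosed (M : Set H))
    (hnear : ∀ g : H, T g ∈ M → g ∈ M)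
    -- `P` is the orthogonal projection of `H` onto `M ∩ T(H)`
    (P : H →L[ℂ] H)
    (hP1 : ∀ x : H, P x ∈ M ⊓ LinearMap.range (T : H →ₗ[ℂ] H))
    (hP2 : ∀ x : H, x - P x ∈ (M ⊓ LinearMap.range (T : H →ₗ[ℂ] H))ᗮ)
    -- `Q = P'` is the orthogonal projection of `H` onto `M ⊖ (M ∩ T(H))`
    (Q : H →L[ℂ] H)
    (hQ1 : ∀ x : H, Q x ∈ M ⊓ (M ⊓ LinearMap.range (T : H →ₗ[ℂ] H))ᗮ)
    (hQ2 : ∀ x : H, x - Q x ∈ (M ⊓ (M ⊓ LinearMap.range (T : H →ₗ[ℂ] H))ᗮ)ᗮ) :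
    -- `T*T` is invertible, and the decomposition formula holds with `R = (T*T)⁻¹ T* P`
    ∃ J : H →L[ℂ] H,
      J.comp ((ContinuousLinearMap.adjoint T).comp T) = ContinuousLinearMap.id ℂ H ∧
      ((ContinuousLinearMap.adjoint T).comp T).comp J = ContinuousLinearMap.id ℂ H ∧
      ∀ h ∈ M, ∀ p : ℕ,
        h = (∑ k ∈ Finset.range (p + 1),
              (T ^ k) (Q (((J.comp ((ContinuousLinearMap.adjoint T).comp P)) ^ k) h)))
            + (T ^ (p + 1)) (((J.comp ((ContinuousLinearMap.adjoint T).comp P)) ^ (p + 1)) h) :=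
  nearly_invariant_decomposition_general T hT M hnear P hP1 hP2 Q hQ1 hQ2
end

section
/- Let H be a Hilbert space and T a bounded operator on H such that ‖h‖ ≤ ‖Th‖ for all h ∈ H, let M be a closed nearly T⁻¹ invariant subspace of H, and set R = (T*T)⁻¹ T* P, where P is the orthogonal projection of H onto M ∩ T(H). Then for every h ∈ H one has T(Rh) = P h, and consequently Rh ∈ M; in particular R(M) ⊆ M. -/
/-- With `‖h‖ ≤ ‖Th‖` for all `h`, `M` a closed nearly `T⁻¹` invariant
subspace, `P` the orthogonal projection onto `M ∩ T(H)`, and `R = (T*T)⁻¹ T* P`, one has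
`T(Rh) = Ph` for every `h ∈ H`, and consequently `Rh ∈ M`; in particular `R(M) ⊆ M`. -/
theorem range_R_subset_nearly_invariant
    {H : Type*} [NormedAddCommGroup H] [InnerProductSpace ℂ H] [CompleteSpace H]
    (T : H →L[ℂ] H)
    (hT : ∀ h : H, ‖h‖ ≤ ‖T h‖)
    -- `M` is a closed nearly `T⁻¹` invariant subspace
    (M : Submodule ℂ H) (hMclosed : IsClosed (M : Set H))
    (hnear : ∀ g : H, T g ∈ M → g ∈ M)
    -- `P` is the orthogonal projection of `H` onto `M ∩ T(H)`
    (P : H →L[ℂ] H)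
    (hP1 : ∀ x : H, P x ∈ M ⊓ LinearMap.range (T : H →ₗ[ℂ] H))
    (hP2 : ∀ x : H, x - P x ∈ (M ⊓ LinearMap.range (T : H →ₗ[ℂ] H))ᗮ)
    -- `J = (T*T)⁻¹`
    (J : H →L[ℂ] H)
    (hJ1 : J.comp ((ContinuousLinearMap.adjoint T).comp T) = ContinuousLinearMap.id ℂ H)
    (hJ2 : ((ContinuousLinearMap.adjoint T).comp T).comp J = ContinuousLinearMap.id ℂ H) :
    -- with `R = (T*T)⁻¹ T* P`: `T(Rh) = Ph` and `Rh ∈ M` for every `h`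
    (∀ h : H, T ((J.comp ((ContinuousLinearMap.adjoint T).comp P)) h) = P h) ∧
    (∀ h : H, (J.comp ((ContinuousLinearMap.adjoint T).comp P)) h ∈ M) ∧
    (∀ h ∈ M, (J.comp ((ContinuousLinearMap.adjoint T).comp P)) h ∈ M) := by
  have key : ∀ h : H, T ((J.comp ((ContinuousLinearMap.adjoint T).comp P)) h) = P h ∧
      (J.comp ((ContinuousLinearMap.adjoint T).comp P)) h ∈ M := by
    intro h
    obtain ⟨hPM, g, hg0⟩ := hP1 h
    have hg : T g = P h := hg0
    have hJg : J ((ContinuousLinearMap.adjoint T) (P h)) = g := by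
      have := congrArg (fun (A : H →L[ℂ] H) => A g) hJ1
      simpa [ContinuousLinearMap.comp_apply, hg] using this
    constructor
    · simp [ContinuousLinearMap.comp_apply, hJg, hg]
    · simp only [ContinuousLinearMap.comp_apply, hJg]
      exact hnear g (by rwa [hg])
  exact ⟨fun h => (key h).1, fun h => (key h).2, fun h _ => (key h).2⟩
end

section
/- Let α ∈ [−1, 0) be a real number and N ≥ 1 a positive integer. Define the weight sequence w : ℕ → ℝ by w_k = N^α for 0 ≤ k ≤ N−1 and w_k = (k+1)^α for k ≥ N. Then for every k ∈ ℕ one has w_{k+1} ≥ (1 − 1/(N+1))^{−α} w_k, with equality when k = N−1; consequently, for every sequence (a_k)_{k≥0} of nonnegative reals, Σ_{k=0}^∞ w_{k+1} a_k ≥ (1 − 1/(N+1))^{−α} Σ_{k=0}^∞ w_k a_k. -/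
open scoped ENNReal

/-!
Put `c = (1 - 1/(N+1))^{-α} = ((N+1)/N)^α`, so that `c N^α = (N+1)^α`; this is the equality at
`k = N - 1`. Below `N` the weights are constant and `c ≤ 1`. Above `N` the ratio
`w_{k+1} / w_k = (1 - 1/(k+2))^{-α}` grows with `k` because `-α ≥ 0`, so it is at least its value
`c` at `k + 1 = N`. The weighted sums then compare termwise.
-/

noncomputable def dirichletWeight (α : ℝ) (N k : ℕ) : ℝ :=
  if k < N then (N : ℝ) ^ α else ((k : ℝ) + 1) ^ α

namespace Real

theorem one_sub_one_div_add_one_rpow_neg_mul_rpow {x : ℝ} (hx : 0 < x) (α : ℝ) :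
    (1 - 1 / (x + 1)) ^ (-α) * x ^ α = (x + 1) ^ α := by
  have hbase : 1 - 1 / (x + 1) = ((x + 1) / x)⁻¹ := by field_simp; ring
  rw [hbase, rpow_neg (by positivity), inv_rpow (by positivity), inv_inv,
    ← mul_rpow (by positivity) hx.le, div_mul_cancel₀ _ hx.ne']

theorem one_sub_one_div_add_one_nonneg {x : ℝ} (hx : 0 ≤ x) : 0 ≤ 1 - 1 / (x + 1) := by
  rw [sub_nonneg, div_le_one (by linarith)]
  linarith

theorem one_sub_one_div_add_one_rpow_neg_le_one {x : ℝ} (hx : 0 ≤ x) {α : ℝ} (hα : α ≤ 0) :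
    (1 - 1 / (x + 1)) ^ (-α) ≤ 1 :=
  rpow_le_one (one_sub_one_div_add_one_nonneg hx)
    (sub_le_self 1 (one_div_nonneg.2 (by linarith))) (neg_nonneg.2 hα)

theorem one_sub_one_div_add_one_rpow_neg_mono {x y : ℝ} (hx : 0 ≤ x) (hxy : x ≤ y) {α : ℝ}
    (hα : α ≤ 0) : (1 - 1 / (x + 1)) ^ (-α) ≤ (1 - 1 / (y + 1)) ^ (-α) :=
  rpow_le_rpow (one_sub_one_div_add_one_nonneg hx)
    (sub_le_sub_left (one_div_le_one_div_of_le (by linarith) (by linarith)) 1) (neg_nonneg.2 hα)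

end Real

open Real

section DirichletWeight

variable {α : ℝ} {N : ℕ}

theorem dirichletWeight_succ_ge (hα : α ≤ 0) (k : ℕ) :
    (1 - 1 / ((N : ℝ) + 1)) ^ (-α) * dirichletWeight α N k ≤ dirichletWeight α N (k + 1) := by
  unfold dirichletWeight
  rcases lt_trichotomy (k + 1) N with hlt | rfl | hgt
  · rw [if_pos (by omega), if_pos hlt]
    exact mul_le_of_le_one_left (by positivity)
      (one_sub_one_div_add_one_rpow_neg_le_one (Nat.cast_nonneg N) hα)
  · rw [if_pos (by omega), if_neg (lt_irrefl _),
      one_sub_one_div_add_one_rpow_neg_mul_rpow (by positivity)]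
  · rw [if_neg (by omega), if_neg (by omega)]
    have hN : (N : ℝ) ≤ k + 1 := by exact_mod_cast hgt.le
    calc (1 - 1 / ((N : ℝ) + 1)) ^ (-α) * ((k : ℝ) + 1) ^ α
        ≤ (1 - 1 / (((k : ℝ) + 1) + 1)) ^ (-α) * ((k : ℝ) + 1) ^ α :=
          mul_le_mul_of_nonneg_right
            (one_sub_one_div_add_one_rpow_neg_mono (Nat.cast_nonneg N) hN hα) (by positivity)
      _ = (((k + 1 : ℕ) : ℝ) + 1) ^ α := by
          rw [one_sub_one_div_add_one_rpow_neg_mul_rpow (by positivity)]; push_cast; rfl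

theorem dirichletWeight_eq_at_pred (hN : 1 ≤ N) :
    dirichletWeight α N N = (1 - 1 / ((N : ℝ) + 1)) ^ (-α) * dirichletWeight α N (N - 1) := by
  unfold dirichletWeight
  rw [if_neg (lt_irrefl _), if_pos (by omega),
    one_sub_one_div_add_one_rpow_neg_mul_rpow (by exact_mod_cast hN)]

end DirichletWeight

theorem ENNReal.ofReal_mul_tsum_le_tsum_of_mul_le {ι : Type*} {c : ℝ} (hc : 0 ≤ c)
    {u v : ι → ℝ} (huv : ∀ i, c * u i ≤ v i) (a : ι → ℝ≥0∞) :
    ENNReal.ofReal c * ∑' i, ENNReal.ofReal (u i) * a i ≤ ∑' i, ENNReal.ofReal (v i) * a i := by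
  rw [← ENNReal.tsum_mul_left]
  refine ENNReal.tsum_le_tsum fun i => ?_
  rw [← mul_assoc, ← ENNReal.ofReal_mul hc]
  exact mul_le_mul_left (ENNReal.ofReal_le_ofReal (huv i)) _

theorem weight_lower_bound_dirichlet_norm_general
    (α : ℝ) (hα0 : α < 0) (N : ℕ) (hN : 1 ≤ N)
    (w : ℕ → ℝ)
    (hw : ∀ k : ℕ, w k = if k < N then (N : ℝ) ^ α else ((k : ℝ) + 1) ^ α) :
    (∀ k : ℕ, (1 - 1 / ((N : ℝ) + 1)) ^ (-α) * w k ≤ w (k + 1)) ∧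
    (w N = (1 - 1 / ((N : ℝ) + 1)) ^ (-α) * w (N - 1)) ∧
    (∀ a : ℕ → ℝ≥0∞,
      ENNReal.ofReal ((1 - 1 / ((N : ℝ) + 1)) ^ (-α)) * ∑' k : ℕ, ENNReal.ofReal (w k) * a k
        ≤ ∑' k : ℕ, ENNReal.ofReal (w (k + 1)) * a k) := by
  obtain rfl : w = dirichletWeight α N := funext hw
  have hstep := dirichletWeight_succ_ge (N := N) hα0.le
  refine ⟨hstep, dirichletWeight_eq_at_pred hN, ?_⟩
  exact ENNReal.ofReal_mul_tsum_le_tsum_of_mul_le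
    (rpow_nonneg (one_sub_one_div_add_one_nonneg (Nat.cast_nonneg N)) _) hstep

/-- For `α ∈ [-1, 0)` and `N ≥ 1`, the weights `w_k = N^α` for `k < N` and
`w_k = (k+1)^α` for `k ≥ N` satisfy `w_{k+1} ≥ (1 - 1/(N+1))^{-α} w_k`, with equality at
`k = N - 1`; consequently `Σ w_{k+1} a_k ≥ (1 - 1/(N+1))^{-α} Σ w_k a_k` for all nonnegative
sequences `(a_k)`. -/
theorem weight_lower_bound_dirichlet_norm
    (α : ℝ) (hα1 : -1 ≤ α) (hα0 : α < 0) (N : ℕ) (hN : 1 ≤ N)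
    (w : ℕ → ℝ)
    (hw : ∀ k : ℕ, w k = if k < N then (N : ℝ) ^ α else ((k : ℝ) + 1) ^ α) :
    (∀ k : ℕ, (1 - 1 / ((N : ℝ) + 1)) ^ (-α) * w k ≤ w (k + 1)) ∧
    (w N = (1 - 1 / ((N : ℝ) + 1)) ^ (-α) * w (N - 1)) ∧
    (∀ a : ℕ → ℝ≥0∞,
      ENNReal.ofReal ((1 - 1 / ((N : ℝ) + 1)) ^ (-α)) * ∑' k : ℕ, ENNReal.ofReal (w k) * a k
        ≤ ∑' k : ℕ, ENNReal.ofReal (w (k + 1)) * a k) :=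
  weight_lower_bound_dirichlet_norm_general α hα0 N hN w hw
end

section
/- Let T be a shift operator on a Hilbert space H and let K = ker T* = H ⊖ T(H). Then the closed subspaces Tⁱ(K), i ∈ ℕ, are pairwise orthogonal and their closed linear span equals H; that is, H is the orthogonal direct sum ⊕_{i=0}^∞ Tⁱ(K). -/
/-!
An isometry satisfies `T* T = 1`. Hence for `i < j` and `T* a = 0`,
`⟪Tⁱ a, Tʲ b⟫ = ⟪T*ʲ⁻ⁱ a, b⟫ = 0`. Since `x - T T* x ∈ ker T*` for every `x`, telescoping puts
`x - Tⁿ T*ⁿ x` in the span of `K, T K, …, Tⁿ⁻¹ K`, and its distance to `x` is `‖T*ⁿ x‖ → 0`.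
-/

open Filter Topology ContinuousLinearMap

theorem Isometry.iterate {α : Type*} [PseudoEMetricSpace α] {f : α → α} (hf : Isometry f) :
    ∀ n : ℕ, Isometry f^[n]
  | 0 => isometry_id
  | n + 1 => (hf.iterate n).comp hf

namespace Module.End

variable {R M : Type*} [Ring R] [AddCommGroup M] [Module R M] {S T : Module.End R M}

theorem sub_pow_mul_pow_apply_mem_iSup_map_ker (hST : S * T = 1) (n : ℕ) (x : M) :
    x - (T ^ n * S ^ n) x ∈ ⨆ i : ℕ, (LinearMap.ker S).map (T ^ i) := by
  induction n with
  | zero => simp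
  | succ n ih =>
    set y := (S ^ n) x
    have hy : y - T (S y) ∈ LinearMap.ker S := by
      rw [LinearMap.mem_ker, map_sub, ← mul_apply S T, hST, one_apply, sub_self]
    have hsplit : x - (T ^ (n + 1) * S ^ (n + 1)) x
        = (x - (T ^ n * S ^ n) x) + (T ^ n) (y - T (S y)) := by
      rw [pow_succ T, pow_succ' S, map_sub]
      simp only [mul_apply, y]
      abel
    rw [hsplit]
    exact add_mem ih (Submodule.mem_iSup_of_mem n ⟨_, hy, rfl⟩)

end Module.End

section Normed

variable {𝕜 E F : Type*} [NormedField 𝕜] [NormedAddCommGroup E] [NormedSpace 𝕜 E]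
  [NormedAddCommGroup F] [NormedSpace 𝕜 F]

theorem Isometry.isClosed_submoduleMap [CompleteSpace E] {f : E →L[𝕜] F} (hf : Isometry f)
    {p : Submodule 𝕜 E} (hp : IsClosed (p : Set E)) :
    IsClosed (p.map (f : E →ₗ[𝕜] F) : Set F) :=
  hf.isClosedEmbedding.isClosedMap _ hp

theorem Isometry.pow {T : E →L[𝕜] E} (hT : Isometry T) (n : ℕ) : Isometry (T ^ n) := by
  rw [FunLike.coe_pow_eq_iterate]
  exact hT.iterate n

theorem topologicalClosure_iSup_map_ker_eq_top {S T : E →L[𝕜] E} (hST : S * T = 1)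
    (hT : Isometry T) (hS : ∀ x, Tendsto (fun n : ℕ => ‖(S ^ n) x‖) atTop (𝓝 0)) :
    (⨆ i : ℕ, (LinearMap.ker (S : E →ₗ[𝕜] E)).map
      ((T ^ i : E →L[𝕜] E) : E →ₗ[𝕜] E)).topologicalClosure = ⊤ := by
  rw [Submodule.eq_top_iff']
  intro x
  have hST' : (S : E →ₗ[𝕜] E) * T = 1 := by
    rw [← toLinearMap_mul, hST, toLinearMap_one]
  have hmem := Module.End.sub_pow_mul_pow_apply_mem_iSup_map_ker hST' (x := x)
  simp only [← toLinearMap_pow, ← toLinearMap_mul] at hmem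
  have htend : Tendsto (fun n : ℕ => x - (T ^ n * S ^ n) x) atTop (𝓝 x) := by
    rw [tendsto_iff_norm_sub_tendsto_zero]
    simpa only [sub_sub_cancel_left, norm_neg, mul_apply_eq_comp,
      (hT.pow _).norm_map_of_map_zero (map_zero _)] using hS x
  rw [← SetLike.mem_coe, Submodule.topologicalClosure_coe]
  exact mem_closure_of_tendsto htend (Eventually.of_forall hmem)

end Normed

section InnerProduct

variable {𝕜 E : Type*} [RCLike 𝕜] [NormedAddCommGroup E] [InnerProductSpace 𝕜 E]
  [CompleteSpace E] {T : E →L[𝕜] E}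

theorem inner_eq_zero_of_mem_map_pow_ker_adjoint (hT : adjoint T * T = 1) {i j : ℕ}
    (hij : i < j) {x y : E}
    (hx : x ∈ (LinearMap.ker (adjoint T : E →ₗ[𝕜] E)).map ((T ^ i : E →L[𝕜] E) : E →ₗ[𝕜] E))
    (hy : y ∈ (LinearMap.ker (adjoint T : E →ₗ[𝕜] E)).map ((T ^ j : E →L[𝕜] E) : E →ₗ[𝕜] E)) :
    inner 𝕜 x y = 0 := by
  obtain ⟨a, ha, rfl⟩ := hx
  obtain ⟨b, -, rfl⟩ := hy
  obtain ⟨k, rfl⟩ : ∃ k, j = k + 1 + i := ⟨j - i - 1, by omega⟩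
  have hcancel : adjoint (T ^ (k + 1 + i)) * T ^ i = adjoint T ^ k * adjoint T := by
    rw [← star_eq_adjoint, star_pow, star_eq_adjoint, pow_add, mul_assoc,
      pow_mul_pow_eq_one i hT, mul_one, pow_succ]
  change inner 𝕜 ((T ^ i) a) ((T ^ (k + 1 + i)) b) = 0
  rw [← adjoint_inner_left, ← mul_apply_eq_comp, hcancel, mul_apply_eq_comp,
    show adjoint T a = 0 from ha, map_zero, inner_zero_left]

end InnerProduct

/-- Wold decomposition for a shift operator. If `T` is a shift operator on a
Hilbert space `H` and `K = ker T* = H ⊖ T(H)`, then the subspaces `Tⁱ(K)` are pairwise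
orthogonal and their closed linear span is all of `H`: `H = ⊕_{i=0}^∞ Tⁱ(K)`. -/
theorem wold_decomposition_of_shift
    {H : Type*} [NormedAddCommGroup H] [InnerProductSpace ℂ H] [CompleteSpace H]
    (T : H →L[ℂ] H)
    -- `T` is a shift operator
    (hiso : Isometry T)
    (hpure : ∀ f : H,
      Tendsto (fun n : ℕ => ‖((ContinuousLinearMap.adjoint T) ^ n) f‖) atTop (𝓝 0)) :
    -- each `Tⁱ(K)` is closed
    (∀ i : ℕ, IsClosed
      (((LinearMap.ker (ContinuousLinearMap.adjoint T : H →ₗ[ℂ] H)).map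
        ((T ^ i : H →L[ℂ] H) : H →ₗ[ℂ] H) : Submodule ℂ H) : Set H)) ∧
    -- the subspaces `Tⁱ(K)` are pairwise orthogonal
    (∀ i j : ℕ, i ≠ j →
      ∀ x ∈ (LinearMap.ker (ContinuousLinearMap.adjoint T : H →ₗ[ℂ] H)).map
          ((T ^ i : H →L[ℂ] H) : H →ₗ[ℂ] H),
      ∀ y ∈ (LinearMap.ker (ContinuousLinearMap.adjoint T : H →ₗ[ℂ] H)).map
          ((T ^ j : H →L[ℂ] H) : H →ₗ[ℂ] H),
      (inner ℂ x y : ℂ) = 0) ∧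
    -- their closed linear span equals `H`
    (⨆ i : ℕ, (LinearMap.ker (ContinuousLinearMap.adjoint T : H →ₗ[ℂ] H)).map
        ((T ^ i : H →L[ℂ] H) : H →ₗ[ℂ] H)).topologicalClosure = ⊤ := by
  have hT : adjoint T * T = 1 := (isometry_iff_adjoint_comp_self T).1 hiso
  refine ⟨fun i => (hiso.pow i).isClosed_submoduleMap (adjoint T).isClosed_ker, ?_,
    topologicalClosure_iSup_map_ker_eq_top hT hiso hpure⟩
  intro i j hij x hx y hy
  rcases hij.lt_or_gt with hlt | hgt
  · exact inner_eq_zero_of_mem_map_pow_ker_adjoint hT hlt hx hy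
  · exact inner_eq_zero_symm.1 (inner_eq_zero_of_mem_map_pow_ker_adjoint hT hgt hy hx)
end
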